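/- Let f be a convex size function, let S* be an optimal solution to f-DS, and write s = |S*| (so s ≥ 2). Let S_2* be a maximum weight subset of V of size 2 and let S_n,…,S_1 be the subsets produced by the greedy peeling. Then w(S*)/f(s) ≤ min{ (f(2)/2)/(f(s)/s²), (2f(n)/n)/(f(s)−f(s−1)) } · max{ w(S_2*)/f(2), max_{1≤i≤n} w(S_i)/f(i) }. -/

import Mathlib

structure WGraph (V : Type) [Fintype V] [DecidableEq V] where
  E : Finset (Sym2 V)
  not_diag : ∀ e ∈ E, ¬ e.IsDiag
  w : Sym2 V → ℝ
  w_pos : ∀ e ∈ E, 0 < w e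

variable {V : Type} [Fintype V] [DecidableEq V]

def WGraph.wS (G : WGraph V) (S : Finset V) : ℝ :=
  ∑ e ∈ G.E.filter (fun e => e ∈ S.sym2), G.w e

def WGraph.deg (G : WGraph V) (S : Finset V) (v : V) : ℝ :=
  ∑ u ∈ S.filter (fun u => s(u, v) ∈ G.E), G.w s(u, v)

/-!
Every edge weighs at most `w(S₂*)`, so every vertex of `S*` has degree at most `s · w(S₂*)`,
and the handshake lemma gives `2 w(S*) ≤ s² w(S₂*)`.

For the peeling bound, let `v` be the first vertex of `S*` removed by the peeling, at a step `i`
with `S* ⊆ S_i`. Optimality of `S*` against `S* ∖ {v}` gives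
`w(S*) (f(s) - f(s-1)) ≤ f(s) d_{S*}(v) ≤ f(s) d_{S_i}(v)`; since `v` has minimum degree in `S_i`,
`i d_{S_i}(v) ≤ 2 w(S_i)`; and convexity with `f(0) = 0` makes `f(i)/i ≤ f(n)/n`.
-/

open Finset

namespace ConvexSize

variable {f : ℕ → ℝ}

lemma increment_monotone (hconv : ∀ x : ℕ, 0 ≤ f x - 2 * f (x + 1) + f (x + 2)) :
    Monotone fun k => f (k + 1) - f k :=
  monotone_nat_of_le_succ fun k => by linarith [hconv k]

lemma le_mul_increment (hconv : ∀ x : ℕ, 0 ≤ f x - 2 * f (x + 1) + f (x + 2)) (hf0 : f 0 = 0)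
    {i j : ℕ} (hij : i ≤ j) : f i ≤ i * (f (j + 1) - f j) := by
  induction i with
  | zero => simp [hf0]
  | succ i ih =>
    have hstep := increment_monotone hconv (show i ≤ j by omega)
    push_cast
    linarith [ih (by omega)]

lemma mul_le_mul_of_le (hconv : ∀ x : ℕ, 0 ≤ f x - 2 * f (x + 1) + f (x + 2)) (hf0 : f 0 = 0)
    {i j : ℕ} (hij : i ≤ j) : (j : ℝ) * f i ≤ i * f j := by
  induction j, hij using Nat.le_induction with
  | base => rfl
  | succ j hij ih =>
    have := le_mul_increment hconv hf0 hij
    push_cast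
    linarith

lemma sub_pred_pos (hconv : ∀ x : ℕ, 0 ≤ f x - 2 * f (x + 1) + f (x + 2)) (hf0 : f 0 = 0)
    (hf1 : 0 < f 1) {s : ℕ} (hs : 1 ≤ s) : 0 < f s - f (s - 1) := by
  obtain ⟨k, rfl⟩ := Nat.exists_eq_add_of_le' hs
  have := increment_monotone hconv (Nat.zero_le k)
  simp only [zero_add, hf0, sub_zero, Nat.add_sub_cancel] at this ⊢
  linarith

lemma sub_pred_nonneg (hconv : ∀ x : ℕ, 0 ≤ f x - 2 * f (x + 1) + f (x + 2)) (hf0 : f 0 = 0)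
    (hf1 : 0 < f 1) (s : ℕ) : 0 ≤ f s - f (s - 1) := by
  rcases Nat.eq_zero_or_pos s with rfl | hs
  · simp
  · exact (sub_pred_pos hconv hf0 hf1 hs).le

end ConvexSize

namespace WGraph

variable (G : WGraph V)

def edgesIn (S : Finset V) : Finset (Sym2 V) := G.E.filter (· ∈ S.sym2)

lemma wS_eq_sum_edgesIn (S : Finset V) : G.wS S = ∑ e ∈ G.edgesIn S, G.w e := rfl

lemma wS_nonneg (S : Finset V) : 0 ≤ G.wS S :=
  sum_nonneg fun e he => (G.w_pos e (mem_filter.mp he).1).le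

lemma w_le_wS {S : Finset V} {e : Sym2 V} (he : e ∈ G.E) (heS : e ∈ S.sym2) :
    G.w e ≤ G.wS S :=
  single_le_sum (fun e' he' => (G.w_pos e' (mem_filter.mp he').1).le) (mem_filter.mpr ⟨he, heS⟩)

lemma w_le_of_forall_card_eq_two {M : ℝ} (hM : ∀ S : Finset V, S.card = 2 → G.wS S ≤ M)
    {e : Sym2 V} (he : e ∈ G.E) : G.w e ≤ M := by
  induction e using Sym2.ind with
  | _ a b =>
    have hab : a ≠ b := fun h => G.not_diag _ he (Sym2.mk_isDiag_iff.mpr h)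
    have hmem : s(a, b) ∈ ({a, b} : Finset V).sym2 := mk_mem_sym2_iff.mpr ⟨by simp, by simp⟩
    exact (G.w_le_wS he hmem).trans (hM _ (card_pair hab))

lemma one_lt_card_of_wS_pos {S : Finset V} (h : 0 < G.wS S) : 1 < S.card := by
  obtain ⟨e, he, -⟩ := exists_ne_zero_of_sum_ne_zero h.ne'
  obtain ⟨heE, heS⟩ := mem_filter.mp he
  induction e using Sym2.ind with
  | _ a b =>
    obtain ⟨ha, hb⟩ := mk_mem_sym2_iff.mp heS
    exact one_lt_card.mpr ⟨a, ha, b, hb, fun h => G.not_diag _ heE (Sym2.mk_isDiag_iff.mpr h)⟩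

lemma deg_nonneg (S : Finset V) (v : V) : 0 ≤ G.deg S v :=
  sum_nonneg fun _ hu => (G.w_pos _ (mem_filter.mp hu).2).le

lemma deg_mono {S T : Finset V} (hST : S ⊆ T) (v : V) : G.deg S v ≤ G.deg T v :=
  sum_le_sum_of_subset_of_nonneg (filter_subset_filter _ hST)
    fun _ hu _ => (G.w_pos _ (mem_filter.mp hu).2).le

lemma deg_eq_sum_incident {S : Finset V} {v : V} (hv : v ∈ S) :
    G.deg S v = ∑ e ∈ (G.edgesIn S).filter (v ∈ ·), G.w e := by
  have himage : (S.filter fun u => s(u, v) ∈ G.E).image (fun u => s(u, v))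
      = (G.edgesIn S).filter (v ∈ ·) := by
    ext e
    simp only [edgesIn, mem_image, mem_filter]
    constructor
    · rintro ⟨u, ⟨hu, he⟩, rfl⟩
      exact ⟨⟨he, mk_mem_sym2_iff.mpr ⟨hu, hv⟩⟩, Sym2.mem_mk_right u v⟩
    · rintro ⟨⟨he, heS⟩, hve⟩
      obtain ⟨u, rfl⟩ := Sym2.mem_iff_exists.mp hve
      rw [Sym2.eq_swap] at he heS ⊢
      exact ⟨u, ⟨(mk_mem_sym2_iff.mp heS).1, he⟩, rfl⟩
  rw [← himage, sum_image fun _ _ _ _ h => Sym2.congr_left.mp h]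
  rfl

lemma wS_eq_wS_erase_add_deg {S : Finset V} {v : V} (hv : v ∈ S) :
    G.wS S = G.wS (S.erase v) + G.deg S v := by
  have hrest : (G.edgesIn S).filter (v ∉ ·) = G.edgesIn (S.erase v) := by
    ext e
    simp only [edgesIn, mem_filter, mem_sym2_iff, mem_erase]
    constructor
    · rintro ⟨⟨he, hS⟩, hve⟩
      exact ⟨he, fun a ha => ⟨fun h => hve (h ▸ ha), hS a ha⟩⟩
    · rintro ⟨he, h⟩
      exact ⟨⟨he, fun a ha => (h a ha).2⟩, fun hve => (h v hve).1 rfl⟩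
  rw [G.deg_eq_sum_incident hv, wS_eq_sum_edgesIn, wS_eq_sum_edgesIn, ← hrest, add_comm]
  exact (sum_filter_add_sum_filter_not _ _ _).symm

lemma sum_deg_eq_two_mul_wS (S : Finset V) : ∑ v ∈ S, G.deg S v = 2 * G.wS S := by
  have hends : ∀ e ∈ G.edgesIn S, S.filter (· ∈ e) = e.toFinset := fun e he => by
    ext v
    simp only [mem_filter, Sym2.mem_toFinset, and_iff_right_iff_imp]
    exact mem_sym2_iff.mp (mem_filter.mp he).2 v
  calc ∑ v ∈ S, G.deg S v
      = ∑ v ∈ S, ∑ e ∈ (G.edgesIn S).filter (v ∈ ·), G.w e :=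
        sum_congr rfl fun v hv => G.deg_eq_sum_incident hv
    _ = ∑ e ∈ G.edgesIn S, ∑ v ∈ S.filter (· ∈ e), G.w e :=
        sum_comm' fun v e => by simp only [mem_filter]; tauto
    _ = ∑ e ∈ G.edgesIn S, 2 * G.w e := sum_congr rfl fun e he => by
        rw [sum_const, hends e he,
          Sym2.card_toFinset_of_not_isDiag e (G.not_diag e (mem_filter.mp he).1), two_nsmul, two_mul]
    _ = 2 * G.wS S := (mul_sum _ _ _).symm

lemma deg_le_card_mul {M : ℝ} (hM0 : 0 ≤ M) (hM : ∀ e ∈ G.E, G.w e ≤ M) (S : Finset V) (v : V) :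
    G.deg S v ≤ S.card * M :=
  calc G.deg S v ≤ (S.filter fun u => s(u, v) ∈ G.E).card • M :=
        sum_le_card_nsmul _ _ _ fun u hu => hM _ (mem_filter.mp hu).2
    _ ≤ S.card * M := by
        rw [nsmul_eq_mul]
        exact mul_le_mul_of_nonneg_right (by exact_mod_cast card_filter_le _ _) hM0

lemma two_mul_wS_le_card_sq_mul {M : ℝ} (hM0 : 0 ≤ M) (hM : ∀ e ∈ G.E, G.w e ≤ M)
    (S : Finset V) : 2 * G.wS S ≤ (S.card : ℝ) ^ 2 * M := by
  rw [← G.sum_deg_eq_two_mul_wS]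
  calc ∑ v ∈ S, G.deg S v ≤ S.card • (S.card * M) :=
        sum_le_card_nsmul _ _ _ fun v _ => G.deg_le_card_mul hM0 hM S v
    _ = (S.card : ℝ) ^ 2 * M := by rw [nsmul_eq_mul]; ring

lemma card_mul_deg_le_two_mul_wS {S : Finset V} {v : V}
    (hmin : ∀ u ∈ S, G.deg S v ≤ G.deg S u) : S.card * G.deg S v ≤ 2 * G.wS S := by
  rw [← G.sum_deg_eq_two_mul_wS, ← nsmul_eq_mul]
  exact card_nsmul_le_sum _ _ _ hmin

lemma wS_mul_sub_le_mul_deg {f : ℕ → ℝ} {S : Finset V} {v : V} (hv : v ∈ S)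
    (hfS : 0 < f S.card) (hfS' : 0 < f (S.card - 1))
    (hdens : G.wS (S.erase v) / f (S.erase v).card ≤ G.wS S / f S.card) :
    G.wS S * (f S.card - f (S.card - 1)) ≤ f S.card * G.deg S v := by
  rw [card_erase_of_mem hv, div_le_div_iff₀ hfS' hfS, G.wS_eq_wS_erase_add_deg hv] at hdens
  rw [G.wS_eq_wS_erase_add_deg hv]
  nlinarith

lemma density_le_of_forall_w_le {f : ℕ → ℝ} {M : ℝ} (hM0 : 0 ≤ M) (hM : ∀ e ∈ G.E, G.w e ≤ M)
    (hf2 : 0 < f 2) {S : Finset V} (hS : S.Nonempty) (hfS : 0 < f S.card) :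
    G.wS S / f S.card ≤ (f 2 / 2) / (f S.card / (S.card : ℝ) ^ 2) * (M / f 2) := by
  have hcard : (0 : ℝ) < S.card := by exact_mod_cast hS.card_pos
  have := G.two_mul_wS_le_card_sq_mul hM0 hM S
  field_simp
  linarith

variable {n : ℕ} {Ss : ℕ → Finset V}

lemma card_peel (hn : n = Fintype.card V) (hSn : Ss n = univ)
    (hpeel : ∀ i, 2 ≤ i → i ≤ n → ∃ v ∈ Ss i,
      (∀ u ∈ Ss i, G.deg (Ss i) v ≤ G.deg (Ss i) u) ∧ Ss (i - 1) = (Ss i).erase v)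
    {i : ℕ} (hi : 1 ≤ i) (hin : i ≤ n) : (Ss i).card = i := by
  induction hin using Nat.decreasingInduction with
  | self => rw [hSn, card_univ, hn]
  | of_succ k hk ih =>
    obtain ⟨v, hv, -, hSk⟩ := hpeel (k + 1) (by omega) hk
    rw [Nat.add_sub_cancel] at hSk
    rw [hSk, card_erase_of_mem hv, ih (by omega), Nat.add_sub_cancel]

lemma exists_peeled_mem (hn : n = Fintype.card V) (hSn : Ss n = univ)
    (hpeel : ∀ i, 2 ≤ i → i ≤ n → ∃ v ∈ Ss i,
      (∀ u ∈ Ss i, G.deg (Ss i) v ≤ G.deg (Ss i) u) ∧ Ss (i - 1) = (Ss i).erase v)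
    {S : Finset V} (hS : 2 ≤ S.card) {i : ℕ} (hi : 1 ≤ i) (hin : i ≤ n) (hSi : S ⊆ Ss i) :
    ∃ j ∈ Icc 1 n, S ⊆ Ss j ∧ ∃ v ∈ S, ∀ u ∈ Ss j, G.deg (Ss j) v ≤ G.deg (Ss j) u := by
  induction i with
  | zero => omega
  | succ k ih =>
    have h2 : 2 ≤ k + 1 :=
      hS.trans ((card_le_card hSi).trans (G.card_peel hn hSn hpeel hi hin).le)
    obtain ⟨v, -, hmin, hSk⟩ := hpeel (k + 1) h2 hin
    by_cases hv : v ∈ S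
    · exact ⟨k + 1, mem_Icc.mpr ⟨hi, hin⟩, hSi, v, hv, hmin⟩
    · rw [Nat.add_sub_cancel] at hSk
      exact ih (by omega) (by omega) (hSk ▸ subset_erase.mpr ⟨hSi, hv⟩)

lemma density_le_peeling_bound {f : ℕ → ℝ} (hf0 : f 0 = 0) (hfpos : ∀ x, 1 ≤ x → 0 < f x)
    (hconv : ∀ x : ℕ, 0 ≤ f x - 2 * f (x + 1) + f (x + 2))
    {Sstar : Finset V} (hs : 2 ≤ Sstar.card)
    (hopt : ∀ S : Finset V, S.Nonempty → G.wS S / f S.card ≤ G.wS Sstar / f Sstar.card)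
    (hn : n = Fintype.card V) (hSn : Ss n = univ)
    (hpeel : ∀ i, 2 ≤ i → i ≤ n → ∃ v ∈ Ss i,
      (∀ u ∈ Ss i, G.deg (Ss i) v ≤ G.deg (Ss i) u) ∧ Ss (i - 1) = (Ss i).erase v) :
    ∃ i ∈ Icc 1 n, G.wS Sstar / f Sstar.card ≤
      (2 * f n / n) / (f Sstar.card - f (Sstar.card - 1)) * (G.wS (Ss i) / f i) := by
  set s := Sstar.card
  have hn2 : 2 ≤ n := hn ▸ hs.trans (card_le_univ Sstar)
  obtain ⟨i, hi, hsub, v, hv, hmin⟩ :=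
    G.exists_peeled_mem hn hSn hpeel hs (by omega) le_rfl (hSn ▸ subset_univ Sstar)
  obtain ⟨hi1, hin⟩ := mem_Icc.mp hi
  refine ⟨i, hi, ?_⟩
  have hfs := hfpos s (by omega)
  have hfi := hfpos i hi1
  have hfn := hfpos n (by omega)
  have hD := ConvexSize.sub_pred_pos hconv hf0 (hfpos 1 le_rfl) (show 1 ≤ s by omega)
  have hopt_v : G.wS Sstar * (f s - f (s - 1)) ≤ f s * G.deg Sstar v :=
    G.wS_mul_sub_le_mul_deg hv hfs (hfpos _ (by omega))
      (hopt _ (one_lt_card_iff_nontrivial.mp hs).erase_nonempty)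
  have hmin_v : (i : ℝ) * G.deg (Ss i) v ≤ 2 * G.wS (Ss i) := by
    simpa only [G.card_peel hn hSn hpeel hi1 hin] using G.card_mul_deg_le_two_mul_wS hmin
  have hratio : (n : ℝ) * f i ≤ i * f n := ConvexSize.mul_le_mul_of_le hconv hf0 hin
  rw [div_div, div_mul_div_comm, div_le_div_iff₀ hfs (by positivity)]
  calc G.wS Sstar * (n * (f s - f (s - 1)) * f i)
      = G.wS Sstar * (f s - f (s - 1)) * (n * f i) := by ring
    _ ≤ f s * G.deg Sstar v * (i * f n) :=
        mul_le_mul hopt_v hratio (by positivity) (mul_nonneg hfs.le (G.deg_nonneg _ _))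
    _ ≤ f s * G.deg (Ss i) v * (i * f n) := by
        gcongr
        exact G.deg_mono hsub v
    _ = f s * f n * (i * G.deg (Ss i) v) := by ring
    _ ≤ f s * f n * (2 * G.wS (Ss i)) := by gcongr
    _ = 2 * f n * G.wS (Ss i) * f s := by ring

end WGraph

theorem stmt7_general (G : WGraph V)
    (n : ℕ) (hn : n = Fintype.card V) (hn1 : 1 ≤ n)
    (f : ℕ → ℝ) (hf0 : f 0 = 0) (hfpos : ∀ x, 1 ≤ x → 0 < f x)
    (hconv : ∀ x : ℕ, 0 ≤ f x - 2 * f (x + 1) + f (x + 2))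
    (Sstar : Finset V)
    (hopt : ∀ S : Finset V, S.Nonempty → G.wS S / f S.card ≤ G.wS Sstar / f Sstar.card)
    (s : ℕ) (hs : s = Sstar.card)
    (S2 : Finset V)
    (hS2max : ∀ S : Finset V, S.card = 2 → G.wS S ≤ G.wS S2)
    (Ss : ℕ → Finset V) (hSn : Ss n = Finset.univ)
    (hpeel : ∀ i, 2 ≤ i → i ≤ n → ∃ v ∈ Ss i,
      (∀ u ∈ Ss i, G.deg (Ss i) v ≤ G.deg (Ss i) u) ∧ Ss (i - 1) = (Ss i).erase v) :
    G.wS Sstar / f s ≤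
      min ((f 2 / 2) / (f s / (s : ℝ) ^ 2)) ((2 * f n / (n : ℝ)) / (f s - f (s - 1))) *
        max (G.wS S2 / f 2)
          ((Finset.Icc 1 n).sup' (Finset.nonempty_Icc.mpr hn1) fun i => G.wS (Ss i) / f i) := by
  subst hs
  set s := Sstar.card
  set M := max (G.wS S2 / f 2)
    ((Finset.Icc 1 n).sup' (Finset.nonempty_Icc.mpr hn1) fun i => G.wS (Ss i) / f i)
  have hf2 : 0 < f 2 := hfpos 2 (by norm_num)
  have hfn : 0 < f n := hfpos n hn1
  have hfs : 0 ≤ f s := by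
    rcases Nat.eq_zero_or_pos s with h | h
    · rw [h, hf0]
    · exact (hfpos _ h).le
  have hpair : 0 ≤ (f 2 / 2) / (f s / (s : ℝ) ^ 2) := by positivity
  have hpeeling : 0 ≤ (2 * f n / (n : ℝ)) / (f s - f (s - 1)) :=
    div_nonneg (by positivity) (ConvexSize.sub_pred_nonneg hconv hf0 (hfpos 1 le_rfl) s)
  have hM : 0 ≤ M := le_max_of_le_left (div_nonneg (G.wS_nonneg S2) hf2.le)
  rcases (G.wS_nonneg Sstar).eq_or_lt with hzero | hpos
  · rw [← hzero, zero_div]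
    exact mul_nonneg (le_min hpair hpeeling) hM
  have hs2 : 2 ≤ s := G.one_lt_card_of_wS_pos hpos
  rw [min_mul_of_nonneg _ _ hM]
  refine le_min ?_ ?_
  · calc G.wS Sstar / f s ≤ (f 2 / 2) / (f s / (s : ℝ) ^ 2) * (G.wS S2 / f 2) :=
          G.density_le_of_forall_w_le (G.wS_nonneg S2) (fun _ => G.w_le_of_forall_card_eq_two hS2max)
            hf2 (card_pos.mp (by omega)) (hfpos s (by omega))
      _ ≤ _ := mul_le_mul_of_nonneg_left (le_max_left _ _) hpair
  · obtain ⟨i, hi, hbound⟩ := G.density_le_peeling_bound hf0 hfpos hconv hs2 hopt hn hSn hpeel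
    have hi_le : G.wS (Ss i) / f i ≤ M :=
      (le_sup' (fun i => G.wS (Ss i) / f i) hi).trans (le_max_right _ _)
    exact hbound.trans (mul_le_mul_of_nonneg_left hi_le hpeeling)

theorem stmt7 (G : WGraph V) (hE : G.E.Nonempty)
    (n : ℕ) (hn : n = Fintype.card V) (hn1 : 1 ≤ n)
    (f : ℕ → ℝ) (hmono : Monotone f) (hf0 : f 0 = 0) (hfpos : ∀ x, 1 ≤ x → 0 < f x)
    (hconv : ∀ x : ℕ, 0 ≤ f x - 2 * f (x + 1) + f (x + 2))
    (Sstar : Finset V) (hne : Sstar.Nonempty)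
    (hopt : ∀ S : Finset V, S.Nonempty → G.wS S / f S.card ≤ G.wS Sstar / f Sstar.card)
    (s : ℕ) (hs : s = Sstar.card)
    (S2 : Finset V) (hS2 : S2.card = 2)
    (hS2max : ∀ S : Finset V, S.card = 2 → G.wS S ≤ G.wS S2)
    (Ss : ℕ → Finset V) (hSn : Ss n = Finset.univ)
    (hpeel : ∀ i, 2 ≤ i → i ≤ n → ∃ v ∈ Ss i,
      (∀ u ∈ Ss i, G.deg (Ss i) v ≤ G.deg (Ss i) u) ∧ Ss (i - 1) = (Ss i).erase v) :
    G.wS Sstar / f s ≤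
      min ((f 2 / 2) / (f s / (s : ℝ) ^ 2)) ((2 * f n / (n : ℝ)) / (f s - f (s - 1))) *
        max (G.wS S2 / f 2)
          ((Finset.Icc 1 n).sup' (Finset.nonempty_Icc.mpr hn1) fun i => G.wS (Ss i) / f i) :=
  stmt7_general G n hn hn1 f hf0 hfpos hconv Sstar hopt s hs S2 hS2max Ss hSn hpeel
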